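/- Let $g : \mathbb{R} \to \mathbb{R}^m$ be continuously differentiable and $2\pi$-periodic, let $\tilde\beta \in \mathbb{R}$, and suppose $g(2\tilde\beta - \theta + \pi) = g(\theta)$ for all $\theta$ and $g'(\theta) \geq 0$ componentwise for $\theta \in [\tilde\beta - \pi/2, \tilde\beta + \pi/2]$. Then for every $\beta \in [\tilde\beta - \pi, \tilde\beta]$ and every $\theta \in (\beta - \pi/2, \beta + \pi/2)$ one has $g(\theta) \leq g(2\beta - \theta + \pi)$ componentwise. -/

import Mathlib

open Real Set

/-!
Put `c = β̃ + π/2`. The symmetry says `g` is even about `c`, and the sign condition makes every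
component nondecreasing on `[c - π, c]`; hence on `[c - π, c + π]` a component of `g` only
decreases with the distance to `c`. The midpoint `β + π/2` of `θ` and its reflection lies in
`[c - π, c]`, so the reflected point is at most as far from `c` as `θ` (or as `θ + 2π` when
`θ < c - π`, using periodicity).
-/

theorem monotoneOn_apply_of_deriv_nonneg {ι : Type*} [Fintype ι] {g : ℝ → ι → ℝ}
    (hg : Differentiable ℝ g) (i : ι) {a b : ℝ} (hderiv : ∀ θ ∈ Icc a b, 0 ≤ deriv g θ i) :
    MonotoneOn (fun θ => g θ i) (Icc a b) := by
  have hasDeriv : ∀ x, HasDerivAt (fun θ => g θ i) (deriv g x i) x :=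
    fun x => hasDerivAt_pi.1 (hg x).hasDerivAt i
  refine monotoneOn_of_hasDerivWithinAt_nonneg (convex_Icc a b)
    (fun x _ => (hasDeriv x).continuousAt.continuousWithinAt)
    (fun x _ => (hasDeriv x).hasDerivWithinAt) fun x hx => hderiv x (interior_subset hx)

section EvenAbout

variable {f : ℝ → ℝ} {c : ℝ}

theorem apply_eq_apply_sub_abs_sub (hsym : ∀ s, f (c + s) = f (c - s)) (x : ℝ) :
    f x = f (c - |x - c|) := by
  rcases le_total c x with hcx | hxc
  · rw [abs_of_nonneg (sub_nonneg.2 hcx), ← hsym]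
    ring_nf
  · rw [abs_of_nonpos (sub_nonpos.2 hxc)]
    ring_nf

theorem le_of_abs_sub_le_abs_sub {ℓ x y : ℝ} (hmono : MonotoneOn f (Icc (c - ℓ) c))
    (hsym : ∀ s, f (c + s) = f (c - s)) (hx : |x - c| ≤ ℓ) (hyx : |y - c| ≤ |x - c|) :
    f x ≤ f y := by
  rw [apply_eq_apply_sub_abs_sub hsym x, apply_eq_apply_sub_abs_sub hsym y]
  have hy : |y - c| ≤ ℓ := hyx.trans hx
  exact hmono ⟨by linarith, by linarith [abs_nonneg (x - c)]⟩
    ⟨by linarith, by linarith [abs_nonneg (y - c)]⟩ (by linarith)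

end EvenAbout

/-- Angular reduction of Proposition A: symmetry with respect to `T_β̃` and
nonnegative angular derivative on the half-space imply domination by the
reflection through `T_β` for every `β ∈ [β̃ - π, β̃]`. -/
theorem stmt3 (m : ℕ) (g : ℝ → (Fin m → ℝ)) (βt : ℝ)
    (hg : ContDiff ℝ 1 g)
    (hper : ∀ θ, g (θ + 2 * π) = g θ)
    (hsym : ∀ θ, g (2 * βt - θ + π) = g θ)
    (hmono : ∀ θ ∈ Set.Icc (βt - π / 2) (βt + π / 2), ∀ i, 0 ≤ deriv g θ i) :
    ∀ β ∈ Set.Icc (βt - π) βt,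
      ∀ θ ∈ Set.Ioo (β - π / 2) (β + π / 2), ∀ i, g θ i ≤ g (2 * β - θ + π) i := by
  rintro β ⟨hβ₁, hβ₂⟩ θ ⟨hθ₁, hθ₂⟩ i
  set c := βt + π / 2 with hc
  have hmono_i : MonotoneOn (fun θ => g θ i) (Icc (c - π) c) := by
    convert monotoneOn_apply_of_deriv_nonneg (hg.differentiable one_ne_zero) i
      fun θ hθ => hmono θ hθ i using 2
    ring
  have hsym_i : ∀ s, g (c + s) i = g (c - s) i := fun s => by
    rw [← hsym (c - s)]
    exact congrArg (g · i) (by rw [hc]; ring)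
  have hπ := pi_pos
  rcases le_or_gt (c - π) θ with hθc | hθc
  · exact le_of_abs_sub_le_abs_sub hmono_i hsym_i
      (abs_le.2 ⟨by linarith, by linarith⟩)
      ((abs_le.2 ⟨by linarith, by linarith⟩).trans (neg_le_abs _))
  · rw [← hper θ]
    exact le_of_abs_sub_le_abs_sub hmono_i hsym_i
      (abs_le.2 ⟨by linarith, by linarith⟩)
      ((abs_le.2 ⟨by linarith, by linarith⟩).trans (le_abs_self _))
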